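/- arXiv:1507.06032 — 4 statements merged into one kernel-verified Lean document; each statement's English description precedes it below -/
import Mathlib

section
/- Let n, p ∈ ℕ, let x ∈ ℝ^{n×p} be raw design data, T ∈ ℝ^n covariate values, K : ℝ → ℝ a nonnegative kernel and h > 0 a bandwidth with S_i := Σ_{j=1}^n K((T_j − T_i)/h) > 0 for every i, and let the kernel-smoothed design be X̃_{ij} = x_{ij} − (1/S_i) Σ_{m=1}^n K((T_m − T_i)/h) x_{mj}. Let Ỹ ∈ ℝ^n, λ₁ ≥ 0, λ₂ > 0, and let β̂ ∈ ℝ^p be a global minimizer of the Elastic Net objective L(β) = Σ_{i=1}^n (Ỹ_i − Σ_{j=1}^p β_j X̃_{ij})² + λ₂ Σ_{j=1}^p β_j² + λ₁ Σ_{j=1}^p |β_j|. Fix indices k, l and suppose β̂_k · β̂_l > 0. Then with m = max_{1≤i≤n} |x_{ik} − x_{il}| and r̂_i = Ỹ_i − Σ_{j=1}^p β̂_j X̃_{ij}, one has |β̂_k − β̂_l| ≤ (2m/λ₂) Σ_{i=1}^n |r̂_i|. -/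
/-!
Along the direction `v = e_k - e_l` the ℓ¹ penalty is affine near `β̂`, because `β̂_k` and `β̂_l`
have the same sign; so the objective restricted to the line `β̂ + ε v` is, for small `ε`, a
quadratic in `ε` minimised at `ε = 0`, and its linear coefficient must vanish. This gives
`λ₂ (β̂_k - β̂_l) = ∑ᵢ (X̃_ik - X̃_il) r̂ᵢ`. Each column of the smoothed design is the raw column
minus a kernel-weighted mean of it, so `|X̃_ik - X̃_il| ≤ 2m`, and the triangle inequality concludes.
-/

open Finset

/-- The Elastic Net objective
`L(β) = ∑ᵢ (Ỹᵢ − ∑ⱼ βⱼ X̃ᵢⱼ)² + λ₂ ∑ⱼ βⱼ² + λ₁ ∑ⱼ |βⱼ|`. -/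
noncomputable def enetObj {n p : ℕ} (Xt : Fin n → Fin p → ℝ) (Yt : Fin n → ℝ)
    (lam1 lam2 : ℝ) (β : Fin p → ℝ) : ℝ :=
  ∑ i, (Yt i - ∑ j, β j * Xt i j) ^ 2 + lam2 * ∑ j, (β j) ^ 2 + lam1 * ∑ j, |β j|

open Filter Topology

theorem eq_zero_of_eventually_nonneg_mul_add_mul_sq {a b : ℝ}
    (h : ∀ᶠ ε in 𝓝 (0 : ℝ), 0 ≤ a * ε + b * ε ^ 2) : a = 0 := by
  have hmin : IsLocalMin (fun ε : ℝ => a * ε + b * ε ^ 2) 0 := by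
    filter_upwards [h] with ε hε
    simpa using hε
  have hderiv : HasDerivAt (fun ε : ℝ => a * ε + b * ε ^ 2) (a * 1 + b * (2 * 0 ^ 1)) 0 :=
    ((hasDerivAt_id' 0).const_mul a).add ((hasDerivAt_pow 2 0).const_mul b)
  simpa using hmin.hasDerivAt_eq_zero hderiv

theorem eventually_abs_add_mul_eq {b c : ℝ} (h : c ≠ 0 → b ≠ 0) :
    ∀ᶠ ε in 𝓝 (0 : ℝ), |b + ε * c| = |b| + ε * (c * Real.sign b) := by
  have hlim : Tendsto (fun ε : ℝ => b + ε * c) (𝓝 0) (𝓝 b) := by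
    simpa using (by fun_prop : Continuous fun ε : ℝ => b + ε * c).tendsto 0
  rcases lt_trichotomy b 0 with hb | rfl | hb
  · filter_upwards [hlim.eventually_lt_const hb] with ε hε
    rw [abs_of_neg hε, abs_of_neg hb, Real.sign_of_neg hb]
    ring
  · obtain rfl : c = 0 := by_contra fun hc => h hc rfl
    simp
  · filter_upwards [hlim.eventually_const_lt hb] with ε hε
    rw [abs_of_pos hε, abs_of_pos hb, Real.sign_of_pos hb]
    ring

theorem eventually_sum_abs_add_mul_eq {ι : Type*} [Fintype ι] {β v : ι → ℝ}
    (h : ∀ j, v j ≠ 0 → β j ≠ 0) :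
    ∀ᶠ ε in 𝓝 (0 : ℝ), ∑ j, |β j + ε * v j| = ∑ j, |β j| + ε * ∑ j, v j * Real.sign (β j) := by
  filter_upwards [eventually_all.2 fun j => eventually_abs_add_mul_eq (h j)] with ε hε
  simp only [hε, sum_add_distrib, mul_sum]

theorem abs_centerMass_le {ι : Type*} {s : Finset ι} {w z : ι → ℝ} {M : ℝ}
    (hw : ∀ i ∈ s, 0 ≤ w i) (hws : 0 < ∑ i ∈ s, w i) (hz : ∀ i ∈ s, |z i| ≤ M) :
    |s.centerMass w z| ≤ M :=
  abs_le.2 <| (convex_Icc (-M) M).centerMass_mem hw hws fun i hi => abs_le.1 (hz i hi)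

theorem abs_sub_weightedMean_sub_sub_weightedMean_le {ι : Type*} [Fintype ι] {w y z : ι → ℝ}
    {M : ℝ} (hw : ∀ i, 0 ≤ w i) (hws : 0 < ∑ i, w i) (hyz : ∀ i, |y i - z i| ≤ M) (i : ι) :
    |(y i - (1 / ∑ m, w m) * ∑ m, w m * y m) - (z i - (1 / ∑ m, w m) * ∑ m, w m * z m)|
      ≤ 2 * M := by
  have hmean : (1 / ∑ m, w m) * ∑ m, w m * y m - (1 / ∑ m, w m) * ∑ m, w m * z m
      = univ.centerMass w (y - z) := by
    simp only [centerMass, Pi.sub_apply, smul_eq_mul, mul_sub, sum_sub_distrib, one_div]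
  calc |(y i - (1 / ∑ m, w m) * ∑ m, w m * y m) - (z i - (1 / ∑ m, w m) * ∑ m, w m * z m)|
      = |(y i - z i) - univ.centerMass w (y - z)| := by rw [← hmean]; congr 1; ring
    _ ≤ |y i - z i| + |univ.centerMass w (y - z)| := abs_sub _ _
    _ ≤ M + M := add_le_add (hyz i) (abs_centerMass_le (fun m _ => hw m) hws fun m _ => hyz m)
    _ = 2 * M := by ring

theorem sum_single_sub_single_mul {ι : Type*} [Fintype ι] [DecidableEq ι] (k l : ι) (f : ι → ℝ) :
    ∑ j, (Pi.single k 1 - Pi.single l 1 : ι → ℝ) j * f j = f k - f l := by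
  simp only [Pi.sub_apply, sub_mul, sum_sub_distrib, Pi.single_apply, ite_mul, one_mul, zero_mul,
    sum_ite_eq', mem_univ, if_true]

section ElasticNet

variable {n p : ℕ} (Xt : Fin n → Fin p → ℝ) (Yt : Fin n → ℝ) (lam1 lam2 : ℝ)

theorem enetObj_add_smul (β v : Fin p → ℝ) (ε : ℝ) :
    enetObj Xt Yt lam1 lam2 (β + ε • v) = enetObj Xt Yt lam1 lam2 β
      + 2 * ε * (lam2 * ∑ j, v j * β j - ∑ i, (∑ j, v j * Xt i j) * (Yt i - ∑ j, β j * Xt i j))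
      + ε ^ 2 * (∑ i, (∑ j, v j * Xt i j) ^ 2 + lam2 * ∑ j, v j ^ 2)
      + lam1 * (∑ j, |β j + ε * v j| - ∑ j, |β j|) := by
  have hres : ∀ i, (Yt i - ∑ j, (β + ε • v) j * Xt i j) ^ 2
      = (Yt i - ∑ j, β j * Xt i j) ^ 2
        - 2 * ε * ((∑ j, v j * Xt i j) * (Yt i - ∑ j, β j * Xt i j))
        + ε ^ 2 * (∑ j, v j * Xt i j) ^ 2 := by
    intro i
    simp only [Pi.add_apply, Pi.smul_apply, smul_eq_mul, add_mul, mul_assoc, sum_add_distrib,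
      ← mul_sum]
    ring
  have hridge : ∀ j, (β + ε • v) j ^ 2 = β j ^ 2 + 2 * ε * (v j * β j) + ε ^ 2 * v j ^ 2 := by
    intro j
    simp only [Pi.add_apply, Pi.smul_apply, smul_eq_mul]
    ring
  rw [enetObj, enetObj]
  simp only [hres, hridge]
  simp only [sum_add_distrib, sum_sub_distrib, ← mul_sum, Pi.add_apply, Pi.smul_apply, smul_eq_mul]
  ring

theorem enetObj_stationary {βh : Fin p → ℝ}
    (hmin : ∀ β, enetObj Xt Yt lam1 lam2 βh ≤ enetObj Xt Yt lam1 lam2 β)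
    {v : Fin p → ℝ} (hv : ∀ j, v j ≠ 0 → βh j ≠ 0) :
    2 * lam2 * ∑ j, v j * βh j + lam1 * ∑ j, v j * Real.sign (βh j)
      = 2 * ∑ i, (∑ j, v j * Xt i j) * (Yt i - ∑ j, βh j * Xt i j) := by
  suffices h : ∀ᶠ ε in 𝓝 (0 : ℝ), 0 ≤
      (2 * (lam2 * ∑ j, v j * βh j - ∑ i, (∑ j, v j * Xt i j) * (Yt i - ∑ j, βh j * Xt i j))
        + lam1 * ∑ j, v j * Real.sign (βh j)) * ε
      + (∑ i, (∑ j, v j * Xt i j) ^ 2 + lam2 * ∑ j, v j ^ 2) * ε ^ 2 by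
    linarith [eq_zero_of_eventually_nonneg_mul_add_mul_sq h]
  filter_upwards [eventually_sum_abs_add_mul_eq hv] with ε hε
  have hle := hmin (βh + ε • v)
  rw [enetObj_add_smul, hε] at hle
  linarith

theorem enetObj_grouping_identity {βh : Fin p → ℝ}
    (hmin : ∀ β, enetObj Xt Yt lam1 lam2 βh ≤ enetObj Xt Yt lam1 lam2 β)
    {k l : Fin p} (hsign : 0 < βh k * βh l) :
    lam2 * (βh k - βh l) = ∑ i, (Xt i k - Xt i l) * (Yt i - ∑ j, βh j * Xt i j) := by
  have hsign_eq : Real.sign (βh k) = Real.sign (βh l) := by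
    rcases mul_pos_iff.1 hsign with ⟨hk, hl⟩ | ⟨hk, hl⟩
    · rw [Real.sign_of_pos hk, Real.sign_of_pos hl]
    · rw [Real.sign_of_neg hk, Real.sign_of_neg hl]
  have hsupp : ∀ j, (Pi.single k 1 - Pi.single l 1 : Fin p → ℝ) j ≠ 0 → βh j ≠ 0 := by
    intro j hj hβ
    have hjk : j ≠ k := by rintro rfl; simp [hβ] at hsign
    have hjl : j ≠ l := by rintro rfl; simp [hβ] at hsign
    simp [hjk, hjl] at hj
  have hstat := enetObj_stationary Xt Yt lam1 lam2 hmin hsupp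
  simp only [sum_single_sub_single_mul, hsign_eq, sub_self] at hstat
  linarith

end ElasticNet

theorem elasticNet_group_effect_general {n p : ℕ}
    (x : Fin n → Fin p → ℝ) (T : Fin n → ℝ)
    (K : ℝ → ℝ) (hK : ∀ y, 0 ≤ K y) (h : ℝ)
    (hS : ∀ i : Fin n, 0 < ∑ j, K ((T j - T i) / h))
    (Xt : Fin n → Fin p → ℝ)
    (hXt : ∀ i j, Xt i j = x i j -
      (1 / ∑ m, K ((T m - T i) / h)) * ∑ m, K ((T m - T i) / h) * x m j)
    (Yt : Fin n → ℝ) (lam1 lam2 : ℝ) (hlam2 : 0 < lam2)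
    (βh : Fin p → ℝ)
    (hmin : ∀ β, enetObj Xt Yt lam1 lam2 βh ≤ enetObj Xt Yt lam1 lam2 β)
    (k l : Fin p) (hsign : βh k * βh l > 0)
    (m : ℝ) (hm : IsGreatest (Set.range fun i : Fin n => |x i k - x i l|) m) :
    |βh k - βh l| ≤ (2 * m / lam2) * ∑ i, |Yt i - ∑ j, βh j * Xt i j| := by
  have hdesign : ∀ i, |Xt i k - Xt i l| ≤ 2 * m := fun i => by
    rw [hXt i k, hXt i l]
    exact abs_sub_weightedMean_sub_sub_weightedMean_le (fun _ => hK _) (hS i)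
      (fun j => hm.2 (Set.mem_range_self j)) i
  rw [div_mul_eq_mul_div, le_div_iff₀ hlam2, ← abs_of_pos hlam2, ← abs_mul, mul_comm,
    enetObj_grouping_identity Xt Yt lam1 lam2 hmin hsign, mul_sum]
  calc |∑ i, (Xt i k - Xt i l) * (Yt i - ∑ j, βh j * Xt i j)|
      ≤ ∑ i, |Xt i k - Xt i l| * |Yt i - ∑ j, βh j * Xt i j| :=
        (abs_sum_le_sum_abs _ _).trans_eq (by simp only [abs_mul])
    _ ≤ ∑ i, 2 * m * |Yt i - ∑ j, βh j * Xt i j| :=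
        sum_le_sum fun i _ => mul_le_mul_of_nonneg_right (hdesign i) (abs_nonneg _)

/-- Theorem 3.1 (group effect of the Elastic Net for partially linear models). -/
theorem elasticNet_group_effect {n p : ℕ}
    (x : Fin n → Fin p → ℝ) (T : Fin n → ℝ)
    (K : ℝ → ℝ) (hK : ∀ y, 0 ≤ K y) (h : ℝ) (hh : 0 < h)
    (hS : ∀ i : Fin n, 0 < ∑ j, K ((T j - T i) / h))
    (Xt : Fin n → Fin p → ℝ)
    (hXt : ∀ i j, Xt i j = x i j -
      (1 / ∑ m, K ((T m - T i) / h)) * ∑ m, K ((T m - T i) / h) * x m j)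
    (Yt : Fin n → ℝ) (lam1 lam2 : ℝ) (hlam1 : 0 ≤ lam1) (hlam2 : 0 < lam2)
    (βh : Fin p → ℝ)
    (hmin : ∀ β, enetObj Xt Yt lam1 lam2 βh ≤ enetObj Xt Yt lam1 lam2 β)
    (k l : Fin p) (hsign : βh k * βh l > 0)
    (m : ℝ) (hm : IsGreatest (Set.range fun i : Fin n => |x i k - x i l|) m) :
    |βh k - βh l| ≤ (2 * m / lam2) * ∑ i, |Yt i - ∑ j, βh j * Xt i j| :=
  elasticNet_group_effect_general x T K hK h hS Xt hXt Yt lam1 lam2 hlam2 βh hmin k l hsign m hm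
end

section
/- Let n, p ∈ ℕ, X̃ ∈ ℝ^{n×p}, Ỹ ∈ ℝ^n, λ₁ ≥ 0, λ₂ > 0, and let β̂ ∈ ℝ^p be a global minimizer of the Elastic Net objective L(β) = Σ_{i=1}^n (Ỹ_i − Σ_{j=1}^p β_j X̃_{ij})² + λ₂ Σ_{j=1}^p β_j² + λ₁ Σ_{j=1}^p |β_j|. Fix indices k, l with β̂_k · β̂_l > 0. Then, with r̂_i = Ỹ_i − Σ_{j=1}^p β̂_j X̃_{ij}, one has |β̂_k − β̂_l| ≤ (1/λ₂) Σ_{i=1}^n |X̃_{ik} − X̃_{il}| · |r̂_i|. -/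
open Finset

/-! Moving `β̂` along `eₖ - eₗ` by a small `t` leaves the `ℓ₁` penalty unchanged, because `β̂ₖ` and
`β̂ₗ` have the same sign. Along that segment the objective is therefore an exact quadratic in `t`
with a local minimum at `0`, so its linear coefficient `2λ₂(β̂ₖ - β̂ₗ) - 2 ∑ᵢ (X̃ᵢₖ - X̃ᵢₗ) r̂ᵢ`
vanishes; the bound is the triangle inequality applied to the resulting identity. -/

open Topology

theorem abs_add_add_abs_sub_eq_of_mul_pos {a b t : ℝ} (hab : 0 < a * b)
    (hta : |t| ≤ |a|) (htb : |t| ≤ |b|) : |a + t| + |b - t| = |a| + |b| := by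
  rw [abs_le] at hta htb
  rcases mul_pos_iff.mp hab with ⟨ha, hb⟩ | ⟨ha, hb⟩
  · rw [abs_of_pos ha, abs_of_pos hb] at *
    rw [abs_of_nonneg (by linarith), abs_of_nonneg (by linarith)]
    ring
  · rw [abs_of_neg ha, abs_of_neg hb] at *
    rw [abs_of_nonpos (by linarith), abs_of_nonpos (by linarith)]
    ring

theorem Fintype.sum_apply_add_smul_single_sub_single {ι R M : Type*} [Fintype ι] [DecidableEq ι]
    [Ring R] [AddCommGroup M] {k l : ι} (hkl : k ≠ l) (φ : ι → R → M) (β : ι → R) (t : R) :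
    ∑ j, φ j ((β + t • (Pi.single k 1 - Pi.single l 1) : ι → R) j) =
      ∑ j, φ j (β j) + (φ k (β k + t) - φ k (β k)) + (φ l (β l - t) - φ l (β l)) := by
  rw [add_assoc, ← sub_eq_iff_eq_add', ← sum_sub_distrib,
    Fintype.sum_eq_add k l hkl fun j hj => by simp [hj.1, hj.2]]
  simp [hkl, hkl.symm, sub_eq_add_neg]

theorem eq_zero_of_eventually_nonneg_quadratic {a b : ℝ}
    (h : ∀ᶠ t in 𝓝 0, 0 ≤ a * t ^ 2 + b * t) : b = 0 := by
  have hmin : IsLocalMin (fun t => a * t ^ 2 + b * t) 0 := by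
    filter_upwards [h] with t ht
    simpa using ht
  have hderiv : HasDerivAt (fun t => a * t ^ 2 + b * t) b 0 := by
    simpa using
      ((hasDerivAt_pow 2 (0 : ℝ)).const_mul a).fun_add ((hasDerivAt_id (0 : ℝ)).const_mul b)
  exact hmin.hasDerivAt_eq_zero hderiv

theorem enetObj_add_smul_single_sub_single {n p : ℕ} (Xt : Fin n → Fin p → ℝ) (Yt : Fin n → ℝ)
    (lam1 lam2 : ℝ) (β : Fin p → ℝ) {k l : Fin p} (hkl : k ≠ l) (hsign : 0 < β k * β l)
    {t : ℝ} (htk : |t| ≤ |β k|) (htl : |t| ≤ |β l|) :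
    enetObj Xt Yt lam1 lam2 (β + t • (Pi.single k 1 - Pi.single l 1) : Fin p → ℝ) =
      enetObj Xt Yt lam1 lam2 β + (∑ i, (Xt i k - Xt i l) ^ 2 + 2 * lam2) * t ^ 2 +
        (2 * lam2 * (β k - β l) - 2 * ∑ i, (Xt i k - Xt i l) * (Yt i - ∑ j, β j * Xt i j)) * t := by
  have hres : ∀ i,
      (Yt i - ∑ j, (β + t • (Pi.single k 1 - Pi.single l 1) : Fin p → ℝ) j * Xt i j) ^ 2 =
        (Yt i - ∑ j, β j * Xt i j) ^ 2 - 2 * t * ((Xt i k - Xt i l) * (Yt i - ∑ j, β j * Xt i j)) +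
          t ^ 2 * (Xt i k - Xt i l) ^ 2 := by
    intro i
    rw [Fintype.sum_apply_add_smul_single_sub_single hkl (fun j x => x * Xt i j)]
    ring
  have hsq := Fintype.sum_apply_add_smul_single_sub_single hkl (fun _ x => x ^ 2) β t
  have habs := Fintype.sum_apply_add_smul_single_sub_single hkl (fun _ x => |x|) β t
  have hl1 : |β k + t| + |β l - t| = |β k| + |β l| :=
    abs_add_add_abs_sub_eq_of_mul_pos hsign htk htl
  simp only [enetObj, sum_congr rfl fun i _ => hres i, hsq, habs, sum_add_distrib,
    sum_sub_distrib, ← mul_sum]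
  linear_combination lam1 * hl1

theorem elasticNet_coeff_sub_eq {n p : ℕ} (Xt : Fin n → Fin p → ℝ) (Yt : Fin n → ℝ)
    (lam1 lam2 : ℝ) (hlam2 : lam2 ≠ 0) (βh : Fin p → ℝ)
    (hmin : ∀ β, enetObj Xt Yt lam1 lam2 βh ≤ enetObj Xt Yt lam1 lam2 β)
    (k l : Fin p) (hsign : 0 < βh k * βh l) :
    βh k - βh l = 1 / lam2 * ∑ i, (Xt i k - Xt i l) * (Yt i - ∑ j, βh j * Xt i j) := by
  rcases eq_or_ne k l with rfl | hkl
  · simp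
  have hε : 0 < min |βh k| |βh l| :=
    lt_min (abs_pos.mpr (left_ne_zero_of_mul hsign.ne'))
      (abs_pos.mpr (right_ne_zero_of_mul hsign.ne'))
  have hlin := eq_zero_of_eventually_nonneg_quadratic (a := ∑ i, (Xt i k - Xt i l) ^ 2 + 2 * lam2)
    (b := 2 * lam2 * (βh k - βh l) - 2 * ∑ i, (Xt i k - Xt i l) * (Yt i - ∑ j, βh j * Xt i j)) <| by
    filter_upwards [Metric.ball_mem_nhds (0 : ℝ) hε] with t ht
    rw [mem_ball_zero_iff, Real.norm_eq_abs, lt_min_iff] at ht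
    have := hmin (βh + t • (Pi.single k 1 - Pi.single l 1))
    rw [enetObj_add_smul_single_sub_single Xt Yt lam1 lam2 βh hkl hsign ht.1.le ht.2.le] at this
    linarith
  field_simp
  linarith

theorem elasticNet_coeff_difference_bound_general {n p : ℕ}
    (Xt : Fin n → Fin p → ℝ) (Yt : Fin n → ℝ)
    (lam1 lam2 : ℝ) (hlam2 : 0 < lam2)
    (βh : Fin p → ℝ)
    (hmin : ∀ β, enetObj Xt Yt lam1 lam2 βh ≤ enetObj Xt Yt lam1 lam2 β)
    (k l : Fin p) (hsign : βh k * βh l > 0) :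
    |βh k - βh l| ≤
      (1 / lam2) * ∑ i, |Xt i k - Xt i l| * |Yt i - ∑ j, βh j * Xt i j| := by
  rw [elasticNet_coeff_sub_eq Xt Yt lam1 lam2 hlam2.ne' βh hmin k l hsign, abs_mul,
    abs_of_pos (one_div_pos.mpr hlam2)]
  gcongr
  exact (abs_sum_le_sum_abs _ _).trans_eq (by simp only [abs_mul])

/-- Intermediate bound in the proof of Theorem 3.1:
`|β̂ₖ − β̂ₗ| ≤ (1/λ₂) ∑ᵢ |X̃ᵢₖ − X̃ᵢₗ| |r̂ᵢ|`. -/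
theorem elasticNet_coeff_difference_bound {n p : ℕ}
    (Xt : Fin n → Fin p → ℝ) (Yt : Fin n → ℝ)
    (lam1 lam2 : ℝ) (hlam1 : 0 ≤ lam1) (hlam2 : 0 < lam2)
    (βh : Fin p → ℝ)
    (hmin : ∀ β, enetObj Xt Yt lam1 lam2 βh ≤ enetObj Xt Yt lam1 lam2 β)
    (k l : Fin p) (hsign : βh k * βh l > 0) :
    |βh k - βh l| ≤
      (1 / lam2) * ∑ i, |Xt i k - Xt i l| * |Yt i - ∑ j, βh j * Xt i j| :=
  elasticNet_coeff_difference_bound_general Xt Yt lam1 lam2 hlam2 βh hmin k l hsign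
end

section
/- Let n, p ∈ ℕ, let x ∈ ℝ^{n×p}, T ∈ ℝ^n, let K : ℝ → ℝ be a nonnegative kernel and h > 0 a bandwidth with S_i := Σ_{j=1}^n K((T_j − T_i)/h) > 0 for every i, and let the kernel-smoothed design be X̃_{ij} = x_{ij} − (1/S_i) Σ_{m=1}^n K((T_m − T_i)/h) x_{mj}. Let Ỹ ∈ ℝ^n, λ₁ ≥ 0, λ₂ > 0, and let β̂ ∈ ℝ^p be a global minimizer of the Elastic Net objective L(β) = Σ_{i=1}^n (Ỹ_i − Σ_{j=1}^p β_j X̃_{ij})² + λ₂ Σ_{j=1}^p β_j² + λ₁ Σ_{j=1}^p |β_j|. Suppose the k-th and l-th columns of the raw design are identical, i.e. x_{ik} = x_{il} for all i ∈ {1,…,n}, and that β̂_k · β̂_l > 0. Then β̂_k = β̂_l. -/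
open Finset

/-- Special case `m = 0` of Theorem 3.1: the Elastic Net assigns identical
coefficients to identical variables. -/
theorem elasticNet_identical_variables {n p : ℕ}
    (x : Fin n → Fin p → ℝ) (T : Fin n → ℝ)
    (K : ℝ → ℝ) (hK : ∀ y, 0 ≤ K y) (h : ℝ) (hh : 0 < h)
    (hS : ∀ i : Fin n, 0 < ∑ j, K ((T j - T i) / h))
    (Xt : Fin n → Fin p → ℝ)
    (hXt : ∀ i j, Xt i j = x i j -
      (1 / ∑ m, K ((T m - T i) / h)) * ∑ m, K ((T m - T i) / h) * x m j)
    (Yt : Fin n → ℝ) (lam1 lam2 : ℝ) (hlam1 : 0 ≤ lam1) (hlam2 : 0 < lam2)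
    (βh : Fin p → ℝ)
    (hmin : ∀ β, enetObj Xt Yt lam1 lam2 βh ≤ enetObj Xt Yt lam1 lam2 β)
    (k l : Fin p) (hcols : ∀ i : Fin n, x i k = x i l)
    (hsign : βh k * βh l > 0) :
    βh k = βh l := by

  by_cases hkl : k = l
  · rw [hkl]
  by_contra hne
  set a := βh k with ha
  set b := βh l with hb
  set m := (a + b) / 2 with hm
  set β : Fin p → ℝ := fun j => if j = k ∨ j = l then m else βh j with hβ
  have hβk : β k = m := by simp [hβ]
  have hβl : β l = m := by simp [hβ]
  have hβo : ∀ j ∈ (univ.erase k).erase l, β j = βh j := by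
    intro j hj
    simp only [Finset.mem_erase] at hj
    simp [hβ, hj.1, hj.2.1]
  have hXtkl : ∀ i, Xt i k = Xt i l := by
    intro i
    simp [hXt, hcols]
  have hlmem : l ∈ univ.erase k := Finset.mem_erase.mpr ⟨Ne.symm hkl, Finset.mem_univ l⟩
  have hsplit : ∀ f : Fin p → ℝ, ∑ j, f j = f k + f l + ∑ j ∈ (univ.erase k).erase l, f j := by
    intro f
    rw [← Finset.add_sum_erase _ f (Finset.mem_univ k),
        ← Finset.add_sum_erase _ f hlmem, add_assoc]
  have hmm : m + m = a + b := by rw [hm]; ring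
  have hres : ∀ i, ∑ j, β j * Xt i j = ∑ j, βh j * Xt i j := by
    intro i
    rw [hsplit (fun j => β j * Xt i j), hsplit (fun j => βh j * Xt i j),
        Finset.sum_congr rfl (fun j hj => by rw [hβo j hj])]
    simp only [hβk, hβl, hXtkl i]
    linear_combination Xt i l * hmm
  have hsq : ∑ j, β j ^ 2 < ∑ j, βh j ^ 2 := by
    rw [hsplit (fun j => β j ^ 2), hsplit (fun j => βh j ^ 2),
        Finset.sum_congr rfl (fun j hj => by rw [hβo j hj])]
    have h0 : a - b ≠ 0 := sub_ne_zero.mpr hne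
    have h1 : 0 < (a - b) ^ 2 := by positivity
    simp only [hβk, hβl, hm]
    nlinarith [h1]
  have habs : ∑ j, |β j| ≤ ∑ j, |βh j| := by
    rw [hsplit (fun j => |β j|), hsplit (fun j => |βh j|),
        Finset.sum_congr rfl (fun j hj => by rw [hβo j hj])]
    have h2 : |m| + |m| ≤ |a| + |b| := by
      have : |a + b| ≤ |a| + |b| := abs_add_le a b
      rw [hm]
      rw [abs_div]
      have : |a + b| / |(2:ℝ)| + |a + b| / |(2:ℝ)| = |a + b| := by
        norm_num
      linarith [abs_add_le a b, this]
    simp only [hβk, hβl]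
    linarith
  have key : enetObj Xt Yt lam1 lam2 β < enetObj Xt Yt lam1 lam2 βh := by
    unfold enetObj
    have hr : ∑ i, (Yt i - ∑ j, β j * Xt i j) ^ 2 = ∑ i, (Yt i - ∑ j, βh j * Xt i j) ^ 2 := by
      refine Finset.sum_congr rfl fun i _ => by rw [hres i]
    rw [hr]
    have h3 : lam2 * ∑ j, β j ^ 2 < lam2 * ∑ j, βh j ^ 2 :=
      mul_lt_mul_of_pos_left hsq hlam2
    have h4 : lam1 * ∑ j, |β j| ≤ lam1 * ∑ j, |βh j| :=
      mul_le_mul_of_nonneg_left habs hlam1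
    linarith
  exact absurd (hmin β) (not_le.mpr key)
end

section
/- Let (Ω, 𝔉, ℙ) be a probability space, p ∈ ℕ, and let Y, ε : Ω → ℝ, X_1, …, X_p : Ω → ℝ, T : Ω → ℝ be random variables with Y, ε and each X_j integrable. Let β ∈ ℝ^p, let f : ℝ → ℝ be measurable with f ∘ T integrable, and suppose Y = Σ_{j=1}^p β_j X_j + f(T) + ε pointwise, that ε is independent of the σ-algebra σ(T) generated by T, and that E[ε] = 0. Then, almost surely, Y − E[Y | σ(T)] = Σ_{j=1}^p β_j (X_j − E[X_j | σ(T)]) + ε. -/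
/-!
Conditioning the model on `σ(T)` is linear, leaves the `σ(T)`-measurable term `f ∘ T` unchanged,
and replaces the noise by its mean `0`, because `ε` is independent of `σ(T)`. Subtracting
`E[Y | σ(T)] = ∑ⱼ βⱼ E[Xⱼ | σ(T)] + f ∘ T` from the model gives the reduced equation.
-/

open MeasureTheory ProbabilityTheory

namespace MeasureTheory

variable {Ω ι : Type*} {m mΩ : MeasurableSpace Ω} {μ : Measure Ω}

theorem condExp_finsetSum_const_mul {s : Finset ι} {X : ι → Ω → ℝ}
    (hX : ∀ j ∈ s, Integrable (X j) μ) (c : ι → ℝ) :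
    μ[fun ω => ∑ j ∈ s, c j * X j ω | m] =ᵐ[μ] fun ω => ∑ j ∈ s, c j * μ[X j | m] ω := by
  have hsum : (fun ω => ∑ j ∈ s, c j * X j ω) = ∑ j ∈ s, c j • X j := by
    ext ω
    simp [Finset.sum_apply]
  have hterm : ∀ᵐ ω ∂μ, ∀ j ∈ s, μ[c j • X j | m] ω = c j * μ[X j | m] ω :=
    (Filter.eventually_all_finset s).2 fun j _ => condExp_smul (c j) (X j) m
  rw [hsum]
  filter_upwards [condExp_finsetSum (fun j hj => (hX j hj).smul (c j)) m, hterm]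
    with ω hω hω_term
  rw [hω, Finset.sum_apply]
  exact Finset.sum_congr rfl hω_term

end MeasureTheory

namespace ProbabilityTheory

variable {Ω β : Type*} {mΩ : MeasurableSpace Ω} {μ : Measure Ω} [IsFiniteMeasure μ]
  [MeasurableSpace β]

theorem IndepFun.condExp_comap_ae_eq_integral {ε : Ω → ℝ} {T : Ω → β}
    (hε : AEStronglyMeasurable ε μ) (hindep : IndepFun ε T μ) (hT : Measurable T) :
    μ[ε | MeasurableSpace.comap T ‹_›] =ᵐ[μ] fun _ => μ[ε] := by
  have hindep' : IndepFun (hε.mk ε) T μ := hindep.congr hε.ae_eq_mk .rfl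
  filter_upwards [condExp_congr_ae (m := MeasurableSpace.comap T ‹_›) hε.ae_eq_mk,
    condExp_indep_eq hε.stronglyMeasurable_mk.measurable.comap_le hT.comap_le
      (Measurable.of_comap_le le_rfl).stronglyMeasurable ((IndepFun_iff_Indep _ _ _).1 hindep')]
    with ω h₁ h₂
  rw [h₁, h₂, integral_congr_ae hε.ae_eq_mk]

end ProbabilityTheory

theorem partiallyLinear_reduction_general {Ω : Type*} [MeasurableSpace Ω]
    (μ : Measure Ω) [IsProbabilityMeasure μ] (p : ℕ)
    (Y ε T : Ω → ℝ) (X : Fin p → Ω → ℝ)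
    (hε : Integrable ε μ) (hX : ∀ j, Integrable (X j) μ)
    (β : Fin p → ℝ) (f : ℝ → ℝ) (hf : Measurable f)
    (hfT : Integrable (fun ω => f (T ω)) μ)
    (hT : Measurable T)
    (hmodel : ∀ ω, Y ω = ∑ j, β j * X j ω + f (T ω) + ε ω)
    (hindep : IndepFun ε T μ)
    (hεmean : ∫ ω, ε ω ∂μ = 0) :
    ∀ᵐ ω ∂μ,
      Y ω - (μ[Y | MeasurableSpace.comap T Real.measurableSpace]) ω =
        ∑ j, β j *
          (X j ω - (μ[X j | MeasurableSpace.comap T Real.measurableSpace]) ω)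
        + ε ω := by
  set mT := MeasurableSpace.comap T Real.measurableSpace
  set L : Ω → ℝ := fun ω => ∑ j, β j * X j ω
  have hL : Integrable L μ := integrable_finsetSum _ fun j _ => (hX j).const_mul (β j)
  have hY : Y = L + (fun ω => f (T ω)) + ε := funext hmodel
  have hcondY : μ[Y | mT] =ᵐ[μ] μ[L | mT] + μ[fun ω => f (T ω) | mT] + μ[ε | mT] := by
    rw [hY]
    filter_upwards [condExp_add (hL.add hfT) hε mT, condExp_add hL hfT mT] with ω h₁ h₂
    simp only [Pi.add_apply] at h₁ h₂ ⊢
    rw [h₁, h₂]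
  have hcondf : μ[fun ω => f (T ω) | mT] = fun ω => f (T ω) :=
    condExp_of_stronglyMeasurable hT.comap_le
      (hf.comp (Measurable.of_comap_le le_rfl)).stronglyMeasurable hfT
  filter_upwards [hcondY, condExp_finsetSum_const_mul (fun j _ => hX j) β,
    hindep.condExp_comap_ae_eq_integral hε.aestronglyMeasurable hT] with ω hY' hL' hε'
  simp only [Pi.add_apply, hcondf] at hY'
  rw [hY', hL', hε', hεmean, hmodel ω]
  simp only [mul_sub, Finset.sum_sub_distrib]
  ring

/-- Reduction of the partially linear model `Y = X'β + f(T) + ε` to the linear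
model (equation (4) of the paper): almost surely,
`Y − E[Y | σ(T)] = ∑ⱼ βⱼ (Xⱼ − E[Xⱼ | σ(T)]) + ε`. -/
theorem partiallyLinear_reduction {Ω : Type*} [MeasurableSpace Ω]
    (μ : Measure Ω) [IsProbabilityMeasure μ] (p : ℕ)
    (Y ε T : Ω → ℝ) (X : Fin p → Ω → ℝ)
    (hY : Integrable Y μ) (hε : Integrable ε μ) (hX : ∀ j, Integrable (X j) μ)
    (β : Fin p → ℝ) (f : ℝ → ℝ) (hf : Measurable f)
    (hfT : Integrable (fun ω => f (T ω)) μ)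
    (hT : Measurable T)
    (hmodel : ∀ ω, Y ω = ∑ j, β j * X j ω + f (T ω) + ε ω)
    (hindep : IndepFun ε T μ)
    (hεmean : ∫ ω, ε ω ∂μ = 0) :
    ∀ᵐ ω ∂μ,
      Y ω - (μ[Y | MeasurableSpace.comap T Real.measurableSpace]) ω =
        ∑ j, β j *
          (X j ω - (μ[X j | MeasurableSpace.comap T Real.measurableSpace]) ω)
        + ε ω :=
  partiallyLinear_reduction_general μ p Y ε T X hε hX β f hf hfT hT hmodel hindep hεmean
end
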